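/- arXiv:2202.07030 — 5 statements merged into one kernel-verified Lean document; each statement's English description precedes it below -/
import Mathlib

section
/- (Weak lower semicontinuity of the affine energy, Theorem 6, C¹ form.) Let 1 ≤ p < n with p > 1, let Ω ⊆ ℝⁿ be a bounded open set, and let u_k (k ∈ ℕ) and u_0 be C¹ functions ℝⁿ → ℝ with compact support contained in Ω. Assume: (a) sup_k ∫_Ω |∇u_k(x)|^p dx < ∞; (b) the gradients converge weakly in L^p, i.e. for every measurable vector field V : Ω → ℝⁿ with ∫_Ω |V(x)|^{p/(p−1)} dx < ∞ one has ∫_Ω ∇u_k(x)·V(x) dx → ∫_Ω ∇u_0(x)·V(x) dx as k → ∞. Then E_{p,Ω}(u_0) ≤ liminf_{k→∞} E_{p,Ω}(u_k). -/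
open MeasureTheory Metric Filter
open scoped ENNReal RealInnerProductSpace NNReal

noncomputable section

/-- Euclidean n-space `ℝⁿ`. -/
abbrev En (n : ℕ) : Type := EuclideanSpace ℝ (Fin n)

/-- The unit sphere `S^{n-1}` of `ℝⁿ`. -/
abbrev unitSphere (n : ℕ) := Metric.sphere (0 : En n) 1

/-- The surface measure `σ` on the unit sphere, with `σ(S^{n-1}) = n ω_n`. -/
def sphereMeasure (n : ℕ) : Measure (unitSphere n) :=
  (volume : Measure (En n)).toSphere

/-- `n ω_n`, where `ω_n` is the volume of the unit Euclidean ball of `ℝⁿ`. -/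
def nOmega (n : ℕ) : ℝ := (n : ℝ) * (volume (Metric.ball (0 : En n) 1)).toReal

/-- The directional energy `Ψ_ξ(u) = ∫_Ω |∇u(x)·ξ|^p dx`. -/
def Psi (n : ℕ) (p : ℝ) (Ω : Set (En n)) (u : En n → ℝ) (ξ : unitSphere n) : ℝ :=
  ∫ x in Ω, |fderiv ℝ u x (ξ : En n)| ^ p

/-- The normalizing constant `α_{n,p}` relative to a chosen unit vector `e₁`. -/
def alphanp (n : ℕ) (p : ℝ) (e₁ : En n) : ℝ :=
  nOmega n ^ (((n : ℝ) + p) / ((n : ℝ) * p)) *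
    (∫ ξ, |⟪e₁, (ξ : En n)⟫| ^ p ∂(sphereMeasure n)) ^ (-(1 / p))

/-- The affine `L^p` energy `E_{p,Ω}(u)`; the conventions `0^{-n/p} = +∞`
and `(+∞)^{-1/n} = 0` are built into `ENNReal.rpow`. -/
def affineEnergy (n : ℕ) (p : ℝ) (e₁ : En n) (Ω : Set (En n)) (u : En n → ℝ) : ℝ :=
  alphanp n p e₁ *
    ((∫⁻ ξ, ENNReal.ofReal (Psi n p Ω u ξ) ^ (-((n : ℝ) / p)) ∂(sphereMeasure n)) ^
      (-(1 / (n : ℝ)))).toReal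

/-!
Write `N_ξ(u) = Ψ_ξ(u)^{1/p}`, the `L^p(Ω)` norm of `∂_ξ u`. Testing the weak convergence
against the field `|∂_ξ u₀|^{p-2} ∂_ξ u₀ · ξ` and applying Hölder's inequality gives
`Ψ_ξ(u₀) ≤ liminf_k Ψ_ξ(u_k)` for every direction `ξ`.

If `Ψ_ξ(u₀) = 0` for some `ξ`, then `u₀` is constant along `ξ`, hence zero, and `E(u₀) = 0`.
Otherwise the maps `ξ ↦ N_ξ(u_k)` are uniformly `C^{1/p}`-Lipschitz, so compactness of the
sphere upgrades the pointwise lower bounds to `Ψ_ξ(u_k) ≥ δ > 0` for all `ξ` and all large `k`.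
This dominates `Ψ_ξ(u_k)^{-n/p}`, and the reverse Fatou lemma gives
`limsup_k ∫ Ψ_ξ(u_k)^{-n/p} dσ ≤ ∫ Ψ_ξ(u₀)^{-n/p} dσ`; since `t ↦ t^{-1/n}` is decreasing, this
is the claim. The bound on `∫ |∇u_k|^p` keeps `E(u_k)` bounded, so that the real `liminf` is
not a junk value.
-/

theorem ENNReal.antitone_rpow_neg {s : ℝ} (hs : 0 ≤ s) : Antitone fun x : ℝ≥0∞ => x ^ (-s) :=
  fun _ _ hxy => by
    simpa [ENNReal.rpow_neg] using ENNReal.inv_le_inv.2 (ENNReal.rpow_le_rpow hxy hs)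

theorem exists_pos_eventually_forall_le_of_equicontinuous {ι X : Type*} [TopologicalSpace X]
    [CompactSpace X] {l : Filter ι} {f : ι → X → ℝ} (hf : Equicontinuous f)
    (hpos : ∀ x, ∃ c > 0, ∀ᶠ i in l, c ≤ f i x) :
    ∃ δ > 0, ∀ᶠ i in l, ∀ x, δ ≤ f i x := by
  suffices ∃ δ > 0, ∀ᶠ i in l, ∀ x ∈ (Set.univ : Set X), δ ≤ f i x by simpa using this
  refine isCompact_univ.induction_on ?_ ?_ ?_ ?_
  · exact ⟨1, one_pos, .of_forall fun _ _ hx => hx.elim⟩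
  · rintro s t hst ⟨δ, hδ, ht⟩
    exact ⟨δ, hδ, ht.mono fun i hi x hx => hi x (hst hx)⟩
  · rintro s t ⟨δ, hδ, hs⟩ ⟨ε, hε, ht⟩
    refine ⟨min δ ε, lt_min hδ hε, (hs.and ht).mono ?_⟩
    rintro i ⟨hsi, hti⟩ x (hx | hx)
    · exact (min_le_left _ _).trans (hsi x hx)
    · exact (min_le_right _ _).trans (hti x hx)
  · intro x _
    obtain ⟨c, hc, hcx⟩ := hpos x
    refine ⟨_, mem_nhdsWithin_of_mem_nhds
      (Metric.equicontinuousAt_iff_right.1 (hf x) (c / 2) (half_pos hc)), c / 2, half_pos hc, ?_⟩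
    filter_upwards [hcx] with i hi y hy
    linarith [(abs_sub_lt_iff.1 (hy i)).1]

theorem limsup_lintegral_le_of_eventually_le {α : Type*} [MeasurableSpace α] {μ : Measure α}
    [IsFiniteMeasure μ] {f : ℕ → α → ℝ≥0∞} {M : ℝ≥0∞} (hM : M ≠ ∞)
    (hf : ∀ k, Measurable (f k)) (hle : ∀ᶠ k in atTop, ∀ x, f k x ≤ M) :
    limsup (fun k => ∫⁻ x, f k x ∂μ) atTop ≤ ∫⁻ x, limsup (fun k => f k x) atTop ∂μ := by
  obtain ⟨N, hN⟩ := eventually_atTop.1 hle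
  calc limsup (fun k => ∫⁻ x, f k x ∂μ) atTop
      = limsup (fun k => ∫⁻ x, f (k + N) x ∂μ) atTop := (limsup_nat_add _ N).symm
    _ ≤ ∫⁻ x, limsup (fun k => f (k + N) x) atTop ∂μ :=
        limsup_lintegral_le (fun _ => M) (fun k => hf (k + N))
          (fun k => .of_forall (hN (k + N) (Nat.le_add_left N k)))
          (by rw [lintegral_const]; exact ENNReal.mul_ne_top hM (measure_ne_top μ _))
    _ = ∫⁻ x, limsup (fun k => f k x) atTop ∂μ :=
        lintegral_congr fun x => limsup_nat_add (fun k => f k x) N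

theorem le_liminf_mul_toReal_rpow_neg {J : ℕ → ℝ≥0∞} {J₀ c : ℝ≥0∞} {a s : ℝ} (ha : 0 ≤ a)
    (hs : 0 < s) (hc : c ≠ 0) (hcJ : ∀ k, c ≤ J k) (hJ : limsup J atTop ≤ J₀) :
    a * (J₀ ^ (-s)).toReal ≤ liminf (fun k => a * (J k ^ (-s)).toReal) atTop := by
  have hanti := ENNReal.antitone_rpow_neg hs.le
  have hbound : ∀ k, ENNReal.ofReal a * J k ^ (-s) ≤ ENNReal.ofReal a * c ^ (-s) :=
    fun k => mul_le_mul_of_nonneg_left (hanti (hcJ k)) zero_le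
  have hfin : ENNReal.ofReal a * c ^ (-s) ≠ ∞ :=
    ENNReal.mul_ne_top ENNReal.ofReal_ne_top (by simp [ENNReal.rpow_eq_top_iff, hc, hs, hs.le])
  have hlim : J₀ ^ (-s) ≤ liminf (fun k => J k ^ (-s)) atTop :=
    (hanti hJ).trans_eq
      (hanti.map_limsup_of_continuousAt J ENNReal.continuous_rpow_const.continuousAt)
  have hmul : ENNReal.ofReal a * liminf (fun k => J k ^ (-s)) atTop =
      liminf (fun k => ENNReal.ofReal a * J k ^ (-s)) atTop :=
    (monotone_id.const_mul' _).map_liminf_of_continuousAt _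
      (ENNReal.continuous_const_mul ENNReal.ofReal_ne_top).continuousAt
  have hreal : ∀ y : ℝ≥0∞, a * y.toReal = (ENNReal.ofReal a * y).toReal := fun y => by
    rw [ENNReal.toReal_mul, ENNReal.toReal_ofReal ha]
  simp only [hreal]
  rw [ENNReal.liminf_toReal_eq hfin (.of_forall hbound)]
  refine ENNReal.toReal_mono (ne_top_of_le_ne_top hfin ?_) (hmul ▸ by gcongr)
  exact liminf_le_of_le (by isBoundedDefault) fun b hb =>
    hb.exists.elim fun k hk => hk.trans (hbound k)

theorem eq_zero_of_fderiv_apply_eq_zero {E F : Type*} [NormedAddCommGroup E] [NormedSpace ℝ E]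
    [NormedAddCommGroup F] [NormedSpace ℝ F] {f : E → F} (hf : Differentiable ℝ f)
    (hfc : HasCompactSupport f) {v : E} (hv : v ≠ 0) (h : ∀ x, fderiv ℝ f x v = 0) : f = 0 := by
  funext x
  set φ : ℝ → F := fun t => f (x + t • v)
  have hφ : ∀ t, HasDerivAt φ 0 t := fun t => by
    simpa [h, Function.comp_def] using (hf _).hasFDerivAt.comp_hasDerivAt t
      (((hasDerivAt_id t).smul_const v).const_add x)
  have hφc : HasCompactSupport φ := hfc.comp_isClosedEmbedding
    ((Homeomorph.addLeft x).isClosedEmbedding.comp (isClosedEmbedding_smul_left hv))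
  obtain ⟨t, ht⟩ := (Set.ne_univ_iff_exists_notMem _).1 hφc.isCompact.ne_univ
  calc f x = φ 0 := by simp [φ]
    _ = φ t := is_const_of_deriv_eq_zero (fun t => (hφ t).differentiableAt)
        (fun t => (hφ t).deriv) 0 t
    _ = 0 := image_eq_zero_of_notMem_tsupport ht

theorem lpNorm_eq_integral_rpow {α E : Type*} [MeasurableSpace α] [NormedAddCommGroup E]
    {μ : Measure α} {p : ℝ} {f : α → E} (hp : 0 < p) (hf : AEStronglyMeasurable f μ) :
    lpNorm f (ENNReal.ofReal p) μ = (∫ x, ‖f x‖ ^ p ∂μ) ^ (1 / p) := by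
  rw [lpNorm_eq_integral_norm_rpow_toReal (by simpa using hp) ENNReal.ofReal_ne_top hf,
    ENNReal.toReal_ofReal hp.le, one_div]

theorem abs_integral_mul_le_Lp_mul_Lq {α : Type*} [MeasurableSpace α] {μ : Measure α}
    {p q : ℝ} (hpq : p.HolderConjugate q) {f g : α → ℝ} (hf : MemLp f (ENNReal.ofReal p) μ)
    (hg : MemLp g (ENNReal.ofReal q) μ) :
    |∫ x, f x * g x ∂μ| ≤ (∫ x, |f x| ^ p ∂μ) ^ (1 / p) * (∫ x, |g x| ^ q ∂μ) ^ (1 / q) :=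
  abs_integral_le_integral_abs.trans <| by
    simpa [abs_mul] using integral_mul_norm_le_Lp_mul_Lq hpq hf hg

/-- For `f ∈ L^p`, `dualPow p ∘ f` is the extremal function of Hölder's inequality. -/
def dualPow (p a : ℝ) : ℝ := |a| ^ (p - 2) * a

section DualPow

variable {p : ℝ}

theorem abs_dualPow (hp : 1 < p) (a : ℝ) : |dualPow p a| = |a| ^ (p - 1) := by
  rw [dualPow, abs_mul, abs_of_nonneg (Real.rpow_nonneg (abs_nonneg a) _),
    show p - 1 = p - 2 + 1 by ring, Real.rpow_add' (abs_nonneg a) (by linarith), Real.rpow_one]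

theorem dualPow_mul_self (hp : 1 < p) (a : ℝ) : dualPow p a * a = |a| ^ p := by
  rw [dualPow, mul_assoc, ← abs_mul_abs_self, ← sq, ← Real.rpow_two,
    ← Real.rpow_add' (abs_nonneg a) (by linarith), sub_add_cancel]

theorem abs_dualPow_rpow (hp : 1 < p) (a : ℝ) : |dualPow p a| ^ (p / (p - 1)) = |a| ^ p := by
  rw [abs_dualPow hp, ← Real.rpow_mul (abs_nonneg a), mul_div_cancel₀ _ (by linarith)]

theorem continuous_dualPow (hp : 1 < p) : Continuous (dualPow p) := by
  rw [continuous_iff_continuousAt]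
  intro a
  rcases eq_or_ne a 0 with rfl | ha
  · rw [ContinuousAt, show dualPow p 0 = 0 by simp [dualPow]]
    refine squeeze_zero_norm (fun t => (Real.norm_eq_abs _).trans_le (abs_dualPow hp t).le) ?_
    simpa [Function.comp_def, Real.zero_rpow (sub_pos.2 hp).ne'] using
      ((Real.continuous_rpow_const (sub_pos.2 hp).le).comp continuous_abs).tendsto 0
  · exact ((Real.continuousAt_rpow_const _ _ (Or.inl (abs_ne_zero.2 ha))).comp
      continuous_abs.continuousAt).mul continuousAt_id

end DualPow

section DirectionalEnergy

variable {n : ℕ} {p : ℝ} {Ω : Set (En n)} {w : En n → ℝ}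

theorem Psi_nonneg (w : En n → ℝ) (ξ : unitSphere n) : 0 ≤ Psi n p Ω w ξ :=
  integral_nonneg fun _ => Real.rpow_nonneg (abs_nonneg _) p

theorem memLp_fderiv_apply (hw : ContDiff ℝ 1 w) (hwc : HasCompactSupport w) (q : ℝ≥0∞)
    (v : En n) : MemLp (fun x => fderiv ℝ w x v) q (volume.restrict Ω) :=
  (((hw.continuous_fderiv one_ne_zero).clm_apply continuous_const).memLp_of_hasCompactSupport
    (hwc.fderiv_apply (𝕜 := ℝ) v)).restrict Ω

theorem memLp_fderiv (hw : ContDiff ℝ 1 w) (hwc : HasCompactSupport w) (q : ℝ≥0∞) :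
    MemLp (fderiv ℝ w) q (volume.restrict Ω) :=
  ((hw.continuous_fderiv one_ne_zero).memLp_of_hasCompactSupport
    (hwc.fderiv (𝕜 := ℝ))).restrict Ω

theorem lpNorm_fderiv_apply_le (hw : ContDiff ℝ 1 w) (hwc : HasCompactSupport w) (q : ℝ≥0∞)
    (v : En n) :
    lpNorm (fun x => fderiv ℝ w x v) q (volume.restrict Ω) ≤
      ‖v‖ * lpNorm (fderiv ℝ w) q (volume.restrict Ω) := by
  have hmem := memLp_fderiv (Ω := Ω) hw hwc q
  calc lpNorm (fun x => fderiv ℝ w x v) q (volume.restrict Ω)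
      ≤ lpNorm (‖v‖ • fun x => ‖fderiv ℝ w x‖) q (volume.restrict Ω) :=
        lpNorm_mono_real (hmem.norm.const_smul _) fun x => by
          simpa [mul_comm] using (fderiv ℝ w x).le_opNorm v
    _ = ‖v‖ * lpNorm (fderiv ℝ w) q (volume.restrict Ω) := by
        rw [lpNorm_const_smul, lpNorm_norm hmem.aestronglyMeasurable]; simp

theorem Psi_rpow_eq_lpNorm (hp : 0 < p) (hw : ContDiff ℝ 1 w) (hwc : HasCompactSupport w)
    (ξ : unitSphere n) :
    Psi n p Ω w ξ ^ (1 / p) =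
      lpNorm (fun x => fderiv ℝ w x ξ) (ENNReal.ofReal p) (volume.restrict Ω) := by
  rw [lpNorm_eq_integral_rpow hp (memLp_fderiv_apply hw hwc (.ofReal p) _).aestronglyMeasurable]
  rfl

theorem Psi_le_integral_norm_fderiv_rpow (hp : 0 < p) (hw : ContDiff ℝ 1 w)
    (hwc : HasCompactSupport w) (ξ : unitSphere n) :
    Psi n p Ω w ξ ≤ ∫ x in Ω, ‖fderiv ℝ w x‖ ^ p := by
  have hp' : ENNReal.ofReal p ≠ 0 := by simpa using hp
  have hdir := (memLp_fderiv_apply (Ω := Ω) hw hwc _ ξ).integrable_norm_rpow hp'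
    ENNReal.ofReal_ne_top
  have hgrad := (memLp_fderiv (Ω := Ω) hw hwc _).integrable_norm_rpow hp' ENNReal.ofReal_ne_top
  rw [ENNReal.toReal_ofReal hp.le] at hdir hgrad
  refine setIntegral_mono hdir hgrad fun x => Real.rpow_le_rpow (abs_nonneg _) ?_ hp.le
  simpa [norm_eq_of_mem_sphere ξ] using (fderiv ℝ w x).le_opNorm ξ

theorem lipschitzWith_Psi_rpow (hp : 1 ≤ p) (hw : ContDiff ℝ 1 w) (hwc : HasCompactSupport w) :
    LipschitzWith ((∫ x in Ω, ‖fderiv ℝ w x‖ ^ p) ^ (1 / p)).toNNReal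
      fun ξ : unitSphere n => Psi n p Ω w ξ ^ (1 / p) := by
  have hp0 : 0 < p := by linarith
  have hp' : 1 ≤ ENNReal.ofReal p := by simpa using hp
  have hsub : ∀ v v' : En n, ((fun x => fderiv ℝ w x v) - fun x => fderiv ℝ w x v') =
      fun x => fderiv ℝ w x (v - v') := fun v v' => by funext x; simp
  have hmem := memLp_fderiv_apply (Ω := Ω) hw hwc (ENNReal.ofReal p)
  refine LipschitzWith.of_dist_le_mul fun ξ η => ?_
  have hL := lpNorm_fderiv_apply_le (Ω := Ω) hw hwc (ENNReal.ofReal p) ((ξ : En n) - η)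
  rw [← lpNorm_eq_integral_rpow hp0 (memLp_fderiv hw hwc (.ofReal p)).aestronglyMeasurable,
    Real.coe_toNNReal _ lpNorm_nonneg, Psi_rpow_eq_lpNorm hp0 hw hwc,
    Psi_rpow_eq_lpNorm hp0 hw hwc, Real.dist_eq, Subtype.dist_eq, dist_eq_norm, mul_comm,
    abs_sub_le_iff]
  constructor
  · have := lpNorm_le_lpNorm_add_lpNorm_sub' (f := fun x => fderiv ℝ w x ξ) (hmem η) hp'
    rw [hsub] at this
    linarith
  · have := lpNorm_le_lpNorm_add_lpNorm_sub (f := fun x => fderiv ℝ w x η) (hmem ξ) hp'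
    rw [hsub] at this
    linarith

theorem continuous_Psi (hp : 1 ≤ p) (hw : ContDiff ℝ 1 w) (hwc : HasCompactSupport w) :
    Continuous fun ξ : unitSphere n => Psi n p Ω w ξ := by
  refine ((lipschitzWith_Psi_rpow (Ω := Ω) hp hw hwc).continuous.rpow_const
    fun _ => Or.inr (by linarith)).congr fun ξ => ?_
  rw [← Real.rpow_mul (Psi_nonneg _ _), one_div_mul_cancel (by linarith), Real.rpow_one]

theorem fderiv_apply_eq_zero_of_Psi_eq_zero (hp : 0 < p) (hw : ContDiff ℝ 1 w)
    (hwc : HasCompactSupport w) (hsupp : tsupport w ⊆ Ω) {ξ : unitSphere n}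
    (hξ : Psi n p Ω w ξ = 0) (x : En n) : fderiv ℝ w x ξ = 0 := by
  by_contra hx
  have hcont : Continuous fun y => |fderiv ℝ w y ξ| ^ p :=
    (((hw.continuous_fderiv one_ne_zero).clm_apply continuous_const).abs).rpow_const
      fun _ => Or.inr hp.le
  have hpos := hcont.integral_pos_of_hasCompactSupport_nonneg_nonzero (μ := volume)
    ((hwc.fderiv_apply (𝕜 := ℝ) (ξ : En n)).comp_left (g := fun t : ℝ => |t| ^ p)
      (by simp [hp.ne']))
    (fun y => Real.rpow_nonneg (abs_nonneg _) p) (Real.rpow_pos_of_pos (abs_pos.2 hx) p).ne'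
  rw [Psi, setIntegral_eq_integral_of_forall_compl_eq_zero fun y hy => by
    simp [fderiv_of_notMem_tsupport ℝ (fun h => hy (hsupp h)), hp.ne']] at hξ
  exact hpos.ne' hξ

end DirectionalEnergy

section WeakLowerSemicontinuity

variable {n : ℕ} {p : ℝ} {Ω : Set (En n)} {u : ℕ → En n → ℝ} {u₀ : En n → ℝ}

def WeakGradTendsto (p : ℝ) (Ω : Set (En n)) (u : ℕ → En n → ℝ) (u₀ : En n → ℝ) : Prop :=
  ∀ V : En n → En n, Measurable V →
    (∫⁻ x in Ω, ENNReal.ofReal (‖V x‖ ^ (p / (p - 1)))) < ⊤ →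
      Tendsto (fun k => ∫ x in Ω, fderiv ℝ (u k) x (V x)) atTop
        (nhds (∫ x in Ω, fderiv ℝ u₀ x (V x)))

theorem continuous_dualPow_fderiv_apply (hp : 1 < p) (hu₀ : ContDiff ℝ 1 u₀) (v : En n) :
    Continuous fun x => dualPow p (fderiv ℝ u₀ x v) :=
  (continuous_dualPow hp).comp ((hu₀.continuous_fderiv one_ne_zero).clm_apply continuous_const)

theorem tendsto_integral_dualPow_mul (hp : 1 < p) (hu₀ : ContDiff ℝ 1 u₀)
    (hcs₀ : HasCompactSupport u₀) (hweak : WeakGradTendsto p Ω u u₀) (ξ : unitSphere n) :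
    Tendsto (fun k => ∫ x in Ω, dualPow p (fderiv ℝ u₀ x ξ) * fderiv ℝ (u k) x ξ) atTop
      (nhds (Psi n p Ω u₀ ξ)) := by
  have hp0 : 0 < p := by linarith
  set V : En n → En n := fun x => dualPow p (fderiv ℝ u₀ x ξ) • (ξ : En n)
  have hV : Measurable V :=
    (continuous_dualPow_fderiv_apply hp hu₀ (ξ : En n)).measurable.smul_const _
  have hfin : (∫⁻ x in Ω, ENNReal.ofReal (‖V x‖ ^ (p / (p - 1)))) < ⊤ := by
    simpa [V, norm_smul, norm_eq_of_mem_sphere ξ, abs_dualPow_rpow hp, hp0.le]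
      using ((memLp_fderiv_apply hu₀ hcs₀ (.ofReal p) ξ).integrable_norm_rpow
        (by simpa using hp0) ENNReal.ofReal_ne_top).lintegral_lt_top
  simpa [V, Psi, dualPow_mul_self hp] using hweak V hV hfin

theorem eventually_lt_Psi (hp : 1 < p) (hu : ∀ k, ContDiff ℝ 1 (u k))
    (hcs : ∀ k, HasCompactSupport (u k)) (hu₀ : ContDiff ℝ 1 u₀) (hcs₀ : HasCompactSupport u₀)
    (hweak : WeakGradTendsto p Ω u u₀) (ξ : unitSphere n) {c : ℝ}
    (hc : c < Psi n p Ω u₀ ξ) : ∀ᶠ k in atTop, c < Psi n p Ω (u k) ξ := by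
  rcases lt_or_ge c 0 with hc0 | hc0
  · exact .of_forall fun k => hc0.trans_le (Psi_nonneg _ _)
  set A := Psi n p Ω u₀ ξ
  have hA : 0 < A := hc0.trans_lt hc
  have hpq := Real.HolderConjugate.conjExponent hp
  set q := p.conjExponent
  set g := fun x => dualPow p (fderiv ℝ u₀ x ξ)
  have hgq : ∫ x in Ω, |g x| ^ q = A := by
    simp only [g, q, Real.conjExponent, abs_dualPow_rpow hp]; rfl
  have hgc : HasCompactSupport g :=
    (hcs₀.fderiv_apply (𝕜 := ℝ) (ξ : En n)).comp_left (g := dualPow p) (by simp [dualPow])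
  have hgmem : MemLp g (ENNReal.ofReal q) (volume.restrict Ω) :=
    ((continuous_dualPow_fderiv_apply hp hu₀ ξ).memLp_of_hasCompactSupport hgc).restrict Ω
  have hHolder : ∀ k,
      ∫ x in Ω, g x * fderiv ℝ (u k) x ξ ≤ Psi n p Ω (u k) ξ ^ (1 / p) * A ^ (1 / q) := by
    intro k
    have := abs_integral_mul_le_Lp_mul_Lq hpq
      (memLp_fderiv_apply (hu k) (hcs k) (.ofReal p) ξ) hgmem
    simp only [hgq, mul_comm (fderiv ℝ (u k) _ _)] at this
    exact (le_abs_self _).trans this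
  have hlt : c ^ (1 / p) * A ^ (1 / q) < A :=
    calc c ^ (1 / p) * A ^ (1 / q) < A ^ (1 / p) * A ^ (1 / q) :=
          mul_lt_mul_of_pos_right (Real.rpow_lt_rpow hc0 hc (by positivity))
            (Real.rpow_pos_of_pos hA _)
      _ = A := by
          rw [← Real.rpow_add hA, one_div, one_div, hpq.inv_add_inv_eq_one, Real.rpow_one]
  filter_upwards [(tendsto_integral_dualPow_mul hp hu₀ hcs₀ hweak ξ).eventually
    (lt_mem_nhds hlt)] with k hk
  have := lt_of_mul_lt_mul_right (hk.trans_le (hHolder k)) (Real.rpow_nonneg hA.le _)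
  exact (Real.rpow_lt_rpow_iff hc0 (Psi_nonneg _ _) (by positivity)).1 this

theorem ofReal_Psi_le_liminf (hp : 1 < p) (hu : ∀ k, ContDiff ℝ 1 (u k))
    (hcs : ∀ k, HasCompactSupport (u k)) (hu₀ : ContDiff ℝ 1 u₀) (hcs₀ : HasCompactSupport u₀)
    (hweak : WeakGradTendsto p Ω u u₀) (ξ : unitSphere n) :
    ENNReal.ofReal (Psi n p Ω u₀ ξ) ≤
      liminf (fun k => ENNReal.ofReal (Psi n p Ω (u k) ξ)) atTop := by
  refine le_of_forall_lt_imp_le_of_dense fun b hb => le_liminf_of_le (by isBoundedDefault) ?_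
  filter_upwards [eventually_lt_Psi hp hu hcs hu₀ hcs₀ hweak ξ
    (ENNReal.toReal_lt_of_lt_ofReal hb)] with k hk
  exact (ENNReal.le_ofReal_iff_toReal_le hb.ne_top (Psi_nonneg _ _)).2 hk.le

theorem exists_pos_eventually_forall_le_Psi (hp : 1 < p) (hu : ∀ k, ContDiff ℝ 1 (u k))
    (hcs : ∀ k, HasCompactSupport (u k)) (hu₀ : ContDiff ℝ 1 u₀) (hcs₀ : HasCompactSupport u₀)
    (hweak : WeakGradTendsto p Ω u u₀) {C : ℝ}
    (hbd : ∀ k, (∫ x in Ω, ‖fderiv ℝ (u k) x‖ ^ p) ≤ C) (hpos : ∀ ξ, 0 < Psi n p Ω u₀ ξ) :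
    ∃ δ > 0, ∀ᶠ k in atTop, ∀ ξ, δ ≤ Psi n p Ω (u k) ξ := by
  have hp0 : 0 < p := by linarith
  have hequi : Equicontinuous fun k (ξ : unitSphere n) => Psi n p Ω (u k) ξ ^ (1 / p) :=
    (LipschitzWith.uniformEquicontinuous _ (C ^ (1 / p)).toNNReal fun k =>
      (lipschitzWith_Psi_rpow hp.le (hu k) (hcs k)).weaken <| Real.toNNReal_le_toNNReal <|
        Real.rpow_le_rpow (integral_nonneg fun _ => by positivity) (hbd k) (by positivity)
      ).equicontinuous
  obtain ⟨δ, hδ, hev⟩ := exists_pos_eventually_forall_le_of_equicontinuous hequi fun ξ =>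
    ⟨(Psi n p Ω u₀ ξ / 2) ^ (1 / p), by have := hpos ξ; positivity,
      (eventually_lt_Psi hp hu hcs hu₀ hcs₀ hweak ξ (half_lt_self (hpos ξ))).mono fun k hk =>
        Real.rpow_le_rpow (by have := hpos ξ; positivity) hk.le (by positivity)⟩
  refine ⟨δ ^ p, by positivity, hev.mono fun k hk ξ => ?_⟩
  calc δ ^ p ≤ (Psi n p Ω (u k) ξ ^ (1 / p)) ^ p := Real.rpow_le_rpow hδ.le (hk ξ) hp0.le
    _ = Psi n p Ω (u k) ξ := by
        rw [← Real.rpow_mul (Psi_nonneg _ _), one_div_mul_cancel hp0.ne', Real.rpow_one]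

end WeakLowerSemicontinuity

/-- `affineEnergy n p e₁ Ω u = alphanp n p e₁ * (psiNegPowIntegral n p Ω u ^ (-(1 / n))).toReal`
holds by `rfl`. -/
def psiNegPowIntegral (n : ℕ) (p : ℝ) (Ω : Set (En n)) (u : En n → ℝ) : ℝ≥0∞ :=
  ∫⁻ ξ, ENNReal.ofReal (Psi n p Ω u ξ) ^ (-((n : ℝ) / p)) ∂(sphereMeasure n)

section EnergyIntegral

variable {n : ℕ} {p : ℝ} {Ω : Set (En n)} {u : ℕ → En n → ℝ} {u₀ : En n → ℝ}

instance : IsFiniteMeasure (sphereMeasure n) := by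
  unfold sphereMeasure; infer_instance

theorem sphereMeasure_univ_ne_zero (hn : n ≠ 0) : sphereMeasure n Set.univ ≠ 0 := by
  rw [sphereMeasure, Measure.toSphere_apply_univ, finrank_euclideanSpace_fin]
  exact mul_ne_zero (by exact_mod_cast hn) (measure_ball_pos _ _ one_pos).ne'

theorem alphanp_nonneg (e₁ : En n) : 0 ≤ alphanp n p e₁ :=
  mul_nonneg (Real.rpow_nonneg (mul_nonneg n.cast_nonneg ENNReal.toReal_nonneg) _)
    (Real.rpow_nonneg (integral_nonneg fun _ => Real.rpow_nonneg (abs_nonneg _) _) _)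

theorem psiNegPowIntegral_eq_top (hn : n ≠ 0) (hp : 0 < p) (hu₀ : ContDiff ℝ 1 u₀)
    (hcs₀ : HasCompactSupport u₀) (hsupp₀ : tsupport u₀ ⊆ Ω) {ξ : unitSphere n}
    (hξ : Psi n p Ω u₀ ξ = 0) : psiNegPowIntegral n p Ω u₀ = ⊤ := by
  obtain rfl : u₀ = 0 := eq_zero_of_fderiv_apply_eq_zero (hu₀.differentiable one_ne_zero) hcs₀
    (ne_zero_of_mem_unit_sphere ξ) (fderiv_apply_eq_zero_of_Psi_eq_zero hp hu₀ hcs₀ hsupp₀ hξ)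
  have hn0 : (0 : ℝ) < n := by exact_mod_cast Nat.pos_of_ne_zero hn
  simp [psiNegPowIntegral, Psi, Real.zero_rpow hp.ne', ENNReal.zero_rpow_of_neg,
    div_pos hn0 hp, sphereMeasure_univ_ne_zero hn]

theorem le_psiNegPowIntegral (hp : 0 ≤ p) {w : En n → ℝ} {C : ℝ}
    (hC : ∀ ξ, Psi n p Ω w ξ ≤ C) :
    ENNReal.ofReal C ^ (-((n : ℝ) / p)) * sphereMeasure n Set.univ ≤
      psiNegPowIntegral n p Ω w := by
  rw [← lintegral_const]
  exact lintegral_mono fun ξ =>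
    ENNReal.antitone_rpow_neg (by positivity) (ENNReal.ofReal_le_ofReal (hC ξ))

theorem limsup_psiNegPowIntegral_le (hn : n ≠ 0) (hp : 1 < p) (hu : ∀ k, ContDiff ℝ 1 (u k))
    (hcs : ∀ k, HasCompactSupport (u k)) (hu₀ : ContDiff ℝ 1 u₀) (hcs₀ : HasCompactSupport u₀)
    (hsupp₀ : tsupport u₀ ⊆ Ω) {C : ℝ} (hbd : ∀ k, (∫ x in Ω, ‖fderiv ℝ (u k) x‖ ^ p) ≤ C)
    (hweak : WeakGradTendsto p Ω u u₀) :
    limsup (fun k => psiNegPowIntegral n p Ω (u k)) atTop ≤ psiNegPowIntegral n p Ω u₀ := by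
  have hp0 : 0 < p := by linarith
  have hanti := ENNReal.antitone_rpow_neg (s := (n : ℝ) / p) (by positivity)
  by_cases h0 : ∃ ξ, Psi n p Ω u₀ ξ = 0
  · obtain ⟨ξ, hξ⟩ := h0
    rw [psiNegPowIntegral_eq_top hn hp0 hu₀ hcs₀ hsupp₀ hξ]
    exact le_top
  have hpos : ∀ ξ, 0 < Psi n p Ω u₀ ξ := fun ξ =>
    (Psi_nonneg _ _).lt_of_ne fun h => h0 ⟨ξ, h.symm⟩
  obtain ⟨δ, hδ, hev⟩ := exists_pos_eventually_forall_le_Psi hp hu hcs hu₀ hcs₀ hweak hbd hpos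
  calc limsup (fun k => psiNegPowIntegral n p Ω (u k)) atTop
      ≤ ∫⁻ ξ, limsup (fun k => ENNReal.ofReal (Psi n p Ω (u k) ξ) ^ (-((n : ℝ) / p))) atTop
          ∂(sphereMeasure n) :=
        limsup_lintegral_le_of_eventually_le (M := ENNReal.ofReal δ ^ (-((n : ℝ) / p)))
          (by simp [ENNReal.rpow_eq_top_iff, hδ, hp0])
          (fun k => (ENNReal.continuous_rpow_const.comp
            (ENNReal.continuous_ofReal.comp (continuous_Psi hp.le (hu k) (hcs k)))).measurable)
          (hev.mono fun k hk ξ => hanti (ENNReal.ofReal_le_ofReal (hk ξ)))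
    _ ≤ psiNegPowIntegral n p Ω u₀ := lintegral_mono fun ξ =>
        (hanti.map_liminf_of_continuousAt _
          ENNReal.continuous_rpow_const.continuousAt).symm.trans_le
            (hanti (ofReal_Psi_le_liminf hp hu hcs hu₀ hcs₀ hweak ξ))

end EnergyIntegral

theorem statement3_general (n : ℕ) (hn : 2 ≤ n) (p : ℝ) (hp1 : 1 < p) (Ω : Set (En n)) (e₁ : En n)
    (u : ℕ → En n → ℝ) (u₀ : En n → ℝ)
    (hu : ∀ k, ContDiff ℝ 1 (u k)) (hcs : ∀ k, HasCompactSupport (u k))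
    (hu₀ : ContDiff ℝ 1 u₀) (hcs₀ : HasCompactSupport u₀) (hsupp₀ : tsupport u₀ ⊆ Ω)
    (C : ℝ) (hbd : ∀ k, (∫ x in Ω, ‖fderiv ℝ (u k) x‖ ^ p) ≤ C)
    (hweak : ∀ V : En n → En n, Measurable V →
      (∫⁻ x in Ω, ENNReal.ofReal (‖V x‖ ^ (p / (p - 1)))) < ⊤ →
      Tendsto (fun k => ∫ x in Ω, fderiv ℝ (u k) x (V x)) atTop
        (nhds (∫ x in Ω, fderiv ℝ u₀ x (V x)))) :
    affineEnergy n p e₁ Ω u₀ ≤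
      atTop.liminf (fun k => affineEnergy n p e₁ Ω (u k)) := by
  have hn0 : n ≠ 0 := by omega
  have hp0 : 0 < p := by linarith
  have hlower : ∀ k, ENNReal.ofReal C ^ (-((n : ℝ) / p)) * sphereMeasure n Set.univ ≤
      psiNegPowIntegral n p Ω (u k) := fun k =>
    le_psiNegPowIntegral hp0.le fun ξ =>
      (Psi_le_integral_norm_fderiv_rpow hp0 (hu k) (hcs k) ξ).trans (hbd k)
  have hc : ENNReal.ofReal C ^ (-((n : ℝ) / p)) * sphereMeasure n Set.univ ≠ 0 :=
    mul_ne_zero (by simp [ENNReal.rpow_eq_zero_iff, div_nonneg n.cast_nonneg hp0.le])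
      (sphereMeasure_univ_ne_zero hn0)
  exact le_liminf_mul_toReal_rpow_neg (alphanp_nonneg e₁)
    (one_div_pos.2 (by exact_mod_cast Nat.pos_of_ne_zero hn0)) hc hlower
    (limsup_psiNegPowIntegral_le hn0 hp1 hu hcs hu₀ hcs₀ hsupp₀ hbd hweak)

/-- Theorem 6 (weak lower semicontinuity of the affine energy, `C¹` form):
if the gradients of `u_k` are bounded in `L^p(Ω)` and converge weakly in `L^p`
to the gradient of `u₀`, then `E_{p,Ω}(u₀) ≤ liminf_k E_{p,Ω}(u_k)`. -/
theorem statement3 (n : ℕ) (hn : 2 ≤ n) (p : ℝ) (hp1 : 1 < p) (hpn : p < n)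
    (Ω : Set (En n)) (hΩo : IsOpen Ω) (hΩb : Bornology.IsBounded Ω)
    (e₁ : En n) (he₁ : ‖e₁‖ = 1)
    (u : ℕ → En n → ℝ) (u₀ : En n → ℝ)
    (hu : ∀ k, ContDiff ℝ 1 (u k)) (hcs : ∀ k, HasCompactSupport (u k))
    (hsupp : ∀ k, tsupport (u k) ⊆ Ω)
    (hu₀ : ContDiff ℝ 1 u₀) (hcs₀ : HasCompactSupport u₀) (hsupp₀ : tsupport u₀ ⊆ Ω)
    (C : ℝ) (hbd : ∀ k, (∫ x in Ω, ‖fderiv ℝ (u k) x‖ ^ p) ≤ C)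
    (hweak : ∀ V : En n → En n, Measurable V →
      (∫⁻ x in Ω, ENNReal.ofReal (‖V x‖ ^ (p / (p - 1)))) < ⊤ →
      Tendsto (fun k => ∫ x in Ω, fderiv ℝ (u k) x (V x)) atTop
        (nhds (∫ x in Ω, fderiv ℝ u₀ x (V x)))) :
    affineEnergy n p e₁ Ω u₀ ≤
      atTop.liminf (fun k => affineEnergy n p e₁ Ω (u k)) :=
  statement3_general n hn p hp1 Ω e₁ u u₀ hu hcs hu₀ hcs₀ hsupp₀ C hbd hweak
end
end

section
/- (Comparison with the Dirichlet energy.) Let 1 ≤ p < n, let Ω ⊆ ℝⁿ be a bounded open set, and let u : ℝⁿ → ℝ be a C¹ function with compact support contained in Ω. Then E_{p,Ω}(u) ≤ (∫_Ω |∇u(x)|^p dx)^{1/p}. -/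
open MeasureTheory Metric Filter
open scoped ENNReal RealInnerProductSpace NNReal

noncomputable section

/-! Rotation invariance of `σ` gives `∫ |⟨v, ξ⟩|^p dσ(ξ) = c_p ‖v‖^p` with
`c_p = ∫ |⟨e₁, ξ⟩|^p dσ`, so by Fubini `∫ Ψ_ξ(u) dσ(ξ) = c_p ∫_Ω |∇u|^p`. Hölder's inequality
applied to `1 = Ψ^θ Ψ^{-θ}` bounds `σ(S^{n-1})^{1 + n/p}` by `(∫ Ψ dσ)^{n/p} ∫ Ψ^{-n/p} dσ`,
and solving this for `(∫ Ψ^{-n/p} dσ)^{-1/n}` is the claim. -/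

open Set

namespace LinearIsometryEquiv

variable {E : Type*} [NormedAddCommGroup E] [NormedSpace ℝ E]

def restrictSphere (R : E ≃ₗᵢ[ℝ] E) (ξ : sphere (0 : E) 1) : sphere (0 : E) 1 :=
  ⟨R ξ, by simp⟩

@[simp]
theorem coe_restrictSphere (R : E ≃ₗᵢ[ℝ] E) (ξ : sphere (0 : E) 1) :
    (R.restrictSphere ξ : E) = R ξ :=
  rfl

theorem continuous_restrictSphere (R : E ≃ₗᵢ[ℝ] E) : Continuous R.restrictSphere :=
  (R.continuous.comp continuous_subtype_val).subtype_mk _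

open scoped Pointwise in
theorem Ioo_smul_image_restrictSphere_preimage (R : E ≃ₗᵢ[ℝ] E) (s : Set (sphere (0 : E) 1)) :
    Ioo (0 : ℝ) 1 • ((↑) '' (R.restrictSphere ⁻¹' s) : Set E)
      = R ⁻¹' (Ioo (0 : ℝ) 1 • ((↑) '' s)) := by
  ext x
  simp only [Set.mem_smul, mem_image, mem_preimage, Subtype.exists, restrictSphere]
  constructor
  · rintro ⟨r, hr, _, ⟨ξ, hξ, hs, rfl⟩, rfl⟩
    exact ⟨r, hr, R ξ, ⟨R ξ, by simpa using hξ, hs, rfl⟩, by simp⟩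
  · rintro ⟨r, hr, _, ⟨η, hη, hs, rfl⟩, hx⟩
    refine ⟨r, hr, R.symm η, ⟨R.symm η, by simpa using hη, by simpa using hs, rfl⟩, ?_⟩
    rw [← R.symm.map_smul, hx, R.symm_apply_apply]

theorem measurePreserving_restrictSphere [MeasurableSpace E] [BorelSpace E] (R : E ≃ₗᵢ[ℝ] E)
    {μ : Measure E} (hR : MeasurePreserving R μ μ) :
    MeasurePreserving R.restrictSphere μ.toSphere μ.toSphere := by
  have hmeas := R.continuous_restrictSphere.measurable
  refine ⟨hmeas, Measure.ext fun s hs => ?_⟩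
  rw [Measure.map_apply hmeas hs, μ.toSphere_apply' (hmeas hs), μ.toSphere_apply' hs,
    Ioo_smul_image_restrictSphere_preimage,
    hR.measure_preimage_emb R.toHomeomorph.measurableEmbedding]

end LinearIsometryEquiv

section InnerProductSpace

variable {E : Type*} [NormedAddCommGroup E] [InnerProductSpace ℝ E]
  [MeasurableSpace E] [BorelSpace E] {μ : Measure E}

/-- The reflection exchanging `e` and `v / ‖v‖` moves `|⟨v, ·⟩|^p` to `‖v‖^p |⟨e, ·⟩|^p`. -/
theorem integral_toSphere_abs_inner_rpow (hμ : ∀ R : E ≃ₗᵢ[ℝ] E, MeasurePreserving R μ μ)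
    (p : ℝ) {e : E} (he : ‖e‖ = 1) (v : E) :
    ∫ ξ, |⟪v, (ξ : E)⟫| ^ p ∂μ.toSphere = ‖v‖ ^ p * ∫ ξ, |⟪e, (ξ : E)⟫| ^ p ∂μ.toSphere := by
  rcases eq_or_ne v 0 with rfl | hv
  · rcases eq_or_ne p 0 with rfl | hp
    · simp
    · simp [Real.zero_rpow hp]
  have hw : ‖‖v‖⁻¹ • v‖ = 1 := norm_smul_inv_norm hv
  set R := (ℝ ∙ (e - ‖v‖⁻¹ • v))ᗮ.reflection
  have hv : v = ‖v‖ • R e := by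
    rw [Submodule.reflection_sub (by rw [he, hw]), smul_inv_smul₀ (norm_ne_zero_iff.2 hv)]
  have hRξ : ∀ ξ : sphere (0 : E) 1, |⟪v, (ξ : E)⟫| ^ p
      = ‖v‖ ^ p * |⟪e, (R.restrictSphere ξ : E)⟫| ^ p := fun ξ => by
    conv_lhs => rw [hv, real_inner_smul_left, abs_mul, abs_norm,
      Real.mul_rpow (norm_nonneg _) (abs_nonneg _)]
    rw [R.coe_restrictSphere, ← R.inner_map_map e, Submodule.reflection_reflection]
  have hg : Measurable fun ξ : sphere (0 : E) 1 => |⟪e, (ξ : E)⟫| ^ p := by fun_prop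
  simp_rw [hRξ]
  rw [integral_const_mul, ← integral_map R.continuous_restrictSphere.aemeasurable
    hg.aestronglyMeasurable, (R.measurePreserving_restrictSphere (hμ R)).map_eq]

variable {u : E → ℝ} {p : ℝ}

theorem integrable_norm_fderiv_rpow (hu : ContDiff ℝ 1 u) (hcs : HasCompactSupport u)
    (hp : 0 < p) (ν : Measure E) [IsFiniteMeasureOnCompacts ν] :
    Integrable (fun x => ‖fderiv ℝ u x‖ ^ p) ν :=
  ((hu.continuous_fderiv one_ne_zero).norm.rpow_const fun _ => Or.inr hp.le
    ).integrable_of_hasCompactSupport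
    ((hcs.fderiv ℝ).norm.comp_left (g := fun t : ℝ => t ^ p) (Real.zero_rpow hp.ne'))

theorem integrable_abs_fderiv_apply_rpow [FiniteDimensional ℝ E] (hu : ContDiff ℝ 1 u) (hcs : HasCompactSupport u)
    (hp : 0 < p) (σ : Measure (sphere (0 : E) 1)) [IsFiniteMeasure σ]
    (ν : Measure E) [IsFiniteMeasureOnCompacts ν] :
    Integrable (fun q : sphere (0 : E) 1 × E => |fderiv ℝ u q.2 q.1| ^ p) (σ.prod ν) := by
  have hcont : Continuous fun q : sphere (0 : E) 1 × E => |fderiv ℝ u q.2 q.1| ^ p :=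
    (((hu.continuous_fderiv one_ne_zero).comp continuous_snd).clm_apply
      (continuous_subtype_val.comp continuous_fst)).abs.rpow_const fun _ => Or.inr hp.le
  refine ((integrable_norm_fderiv_rpow hu hcs hp ν).comp_snd σ).mono'
    hcont.aestronglyMeasurable (ae_of_all _ fun q => ?_)
  rw [Real.norm_of_nonneg (by positivity)]
  refine Real.rpow_le_rpow (abs_nonneg _) ?_ hp.le
  simpa [mem_sphere_zero_iff_norm.1 q.1.2] using (fderiv ℝ u q.2).le_opNorm q.1

theorem integral_toSphere_integral_abs_fderiv_apply_rpow [FiniteDimensional ℝ E]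
    [IsFiniteMeasure μ.toSphere]
    (hμ : ∀ R : E ≃ₗᵢ[ℝ] E, MeasurePreserving R μ μ) (hu : ContDiff ℝ 1 u)
    (hcs : HasCompactSupport u) (hp : 0 < p) {e : E} (he : ‖e‖ = 1)
    (ν : Measure E) [IsFiniteMeasureOnCompacts ν] :
    ∫ ξ, ∫ x, |fderiv ℝ u x ξ| ^ p ∂ν ∂μ.toSphere
      = (∫ ξ, |⟪e, (ξ : E)⟫| ^ p ∂μ.toSphere) * ∫ x, ‖fderiv ℝ u x‖ ^ p ∂ν := by
  have hdual : ∀ x, ∀ ξ : E,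
      fderiv ℝ u x ξ = ⟪(InnerProductSpace.toDual ℝ E).symm (fderiv ℝ u x), ξ⟫ :=
    fun x ξ => InnerProductSpace.toDual_symm_apply.symm
  rw [integral_integral_swap (integrable_abs_fderiv_apply_rpow hu hcs hp _ ν),
    ← integral_const_mul]
  refine integral_congr_ae (ae_of_all _ fun x => ?_)
  simp only [hdual x]
  rw [integral_toSphere_abs_inner_rpow hμ p he, LinearIsometryEquiv.norm_map, mul_comm]

end InnerProductSpace

theorem measure_univ_rpow_le_lintegral_mul_lintegral_rpow_neg {α : Type*} [MeasurableSpace α]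
    (μ : Measure α) {f : α → ℝ≥0∞} (hf : AEMeasurable f μ) (hf_top : ∀ᵐ x ∂μ, f x ≠ ∞)
    {b : ℝ} (hb : 0 < b) (hI : ∫⁻ x, f x ^ (-b) ∂μ ≠ ∞) :
    μ univ ^ (1 + b) ≤ (∫⁻ x, f x ∂μ) ^ b * ∫⁻ x, f x ^ (-b) ∂μ := by
  have hf0 : ∀ᵐ x ∂μ, f x ≠ 0 := by
    filter_upwards [ae_lt_top' (hf.pow_const _) hI] with x hx hx0
    simp [hx0, ENNReal.zero_rpow_of_neg (neg_neg_of_pos hb)] at hx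
  set θ := b / (1 + b) with hθ
  have hconj : Real.HolderConjugate ((1 + b) / b) (1 + b) := by
    rw [Real.holderConjugate_iff]
    constructor
    · rw [lt_div_iff₀ hb]; linarith
    · field_simp; ring
  have hone : ∫⁻ x, (f x ^ θ * f x ^ (-θ)) ∂μ = μ univ := by
    rw [← lintegral_one]
    refine lintegral_congr_ae ?_
    filter_upwards [hf0, hf_top] with x h0 htop
    rw [← ENNReal.rpow_add _ _ h0 htop, add_neg_cancel, ENNReal.rpow_zero]
  have hHolder :=
    ENNReal.lintegral_mul_le_Lp_mul_Lq μ hconj (hf.pow_const θ) (hf.pow_const (-θ))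
  have h1 : θ * ((1 + b) / b) = 1 := by rw [hθ]; field_simp
  have h2 : -θ * (1 + b) = -b := by rw [hθ]; field_simp
  simp only [Pi.mul_apply, hone, ← ENNReal.rpow_mul, h1, h2, ENNReal.rpow_one] at hHolder
  calc μ univ ^ (1 + b)
      ≤ ((∫⁻ x, f x ∂μ) ^ (1 / ((1 + b) / b)) * (∫⁻ x, f x ^ (-b) ∂μ) ^ (1 / (1 + b)))
          ^ (1 + b) := ENNReal.rpow_le_rpow hHolder (by linarith)
    _ = (∫⁻ x, f x ∂μ) ^ b * ∫⁻ x, f x ^ (-b) ∂μ := by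
        rw [ENNReal.mul_rpow_of_nonneg _ _ (by linarith), ← ENNReal.rpow_mul,
          ← ENNReal.rpow_mul]
        congr 2
        · field_simp
        · field_simp; simp

theorem rpow_mul_rpow_neg_mul_rpow_neg_le {N P s c D i : ℝ} (hN : 0 < N) (hP : 0 < P)
    (hs : 0 ≤ s) (hc : 0 ≤ c) (hD : 0 ≤ D) (hi : 0 ≤ i)
    (h : s ^ (1 + N / P) ≤ (c * D) ^ (N / P) * i) :
    s ^ ((N + P) / (N * P)) * c ^ (-(1 / P)) * i ^ (-(1 / N)) ≤ D ^ (1 / P) := by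
  have hkey : s ^ (1 + N / P) * c ^ (-(N / P)) * i⁻¹ ≤ D ^ (N / P) := by
    rcases hc.eq_or_lt with rfl | hc
    · simp [Real.zero_rpow (neg_ne_zero.2 (div_pos hN hP).ne'), Real.rpow_nonneg hD]
    rcases hi.eq_or_lt with rfl | hi
    · simp [Real.rpow_nonneg hD]
    rw [Real.rpow_neg hc.le, mul_assoc, ← mul_inv, ← div_eq_mul_inv,
      div_le_iff₀ (by positivity), ← mul_assoc, ← Real.mul_rpow hD hc.le, mul_comm D]
    exact h
  have hs' : 0 ≤ s ^ (1 + N / P) := by positivity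
  calc s ^ ((N + P) / (N * P)) * c ^ (-(1 / P)) * i ^ (-(1 / N))
      = (s ^ (1 + N / P) * c ^ (-(N / P)) * i⁻¹) ^ (1 / N) := by
        rw [Real.mul_rpow (by positivity) (by positivity), Real.mul_rpow hs' (by positivity),
          ← Real.rpow_mul hs, ← Real.rpow_mul hc, Real.inv_rpow hi, ← Real.rpow_neg hi]
        congr 3
        · field_simp; ring
        · field_simp
    _ ≤ (D ^ (N / P)) ^ (1 / N) := Real.rpow_le_rpow (by positivity) hkey (by positivity)
    _ = D ^ (1 / P) := by rw [← Real.rpow_mul hD]; field_simp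

section Euclidean

variable {n : ℕ} {p : ℝ} {Ω : Set (En n)} {u : En n → ℝ}

theorem nOmega_eq_toReal_sphereMeasure_univ (n : ℕ) : nOmega n = (sphereMeasure n univ).toReal := by
  rw [nOmega, sphereMeasure, Measure.toSphere_apply_univ, finrank_euclideanSpace_fin,
    ENNReal.toReal_mul, ENNReal.toReal_natCast]

theorem integrable_Psi (hu : ContDiff ℝ 1 u) (hcs : HasCompactSupport u) (hp : 0 < p) :
    Integrable (Psi n p Ω u) (sphereMeasure n) :=
  (integrable_abs_fderiv_apply_rpow hu hcs hp (volume : Measure (En n)).toSphere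
    (volume.restrict Ω)).integral_prod_left

theorem lintegral_ofReal_Psi (hu : ContDiff ℝ 1 u) (hcs : HasCompactSupport u) (hp : 0 < p)
    {e : En n} (he : ‖e‖ = 1) :
    ∫⁻ ξ, ENNReal.ofReal (Psi n p Ω u ξ) ∂sphereMeasure n
      = ENNReal.ofReal ((∫ ξ, |⟪e, (ξ : En n)⟫| ^ p ∂sphereMeasure n)
          * ∫ x in Ω, ‖fderiv ℝ u x‖ ^ p) := by
  rw [← ofReal_integral_eq_lintegral_ofReal (integrable_Psi hu hcs hp)
    (ae_of_all _ fun _ => integral_nonneg fun _ => by positivity)]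
  exact congrArg ENNReal.ofReal <| integral_toSphere_integral_abs_fderiv_apply_rpow
    (fun R => R.measurePreserving) hu hcs hp he _

end Euclidean

theorem statement7_general (n : ℕ) (hn : 2 ≤ n) (p : ℝ) (hp : 1 ≤ p)
    (Ω : Set (En n))
    (e₁ : En n) (he₁ : ‖e₁‖ = 1)
    (u : En n → ℝ) (hu : ContDiff ℝ 1 u) (hcs : HasCompactSupport u) :
    affineEnergy n p e₁ Ω u ≤ (∫ x in Ω, ‖fderiv ℝ u x‖ ^ p) ^ (1 / p) := by
  have hp0 : 0 < p := by linarith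
  have hn0 : (0 : ℝ) < n := by exact_mod_cast (by omega : 0 < n)
  set I := ∫⁻ ξ, ENNReal.ofReal (Psi n p Ω u ξ) ^ (-((n : ℝ) / p)) ∂sphereMeasure n with hIdef
  rcases eq_or_ne I ∞ with hI | hI
  · rw [affineEnergy, ← hIdef, hI, ENNReal.top_rpow_of_neg (by simpa using hn0),
      ENNReal.toReal_zero, mul_zero]
    positivity
  have hHolder := measure_univ_rpow_le_lintegral_mul_lintegral_rpow_neg (sphereMeasure n)
    (integrable_Psi hu hcs hp0).aemeasurable.ennreal_ofReal
    (ae_of_all _ fun _ => ENNReal.ofReal_ne_top) (div_pos hn0 hp0) hI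
  rw [lintegral_ofReal_Psi hu hcs hp0 he₁] at hHolder
  have hc : 0 ≤ ∫ ξ, |⟪e₁, (ξ : En n)⟫| ^ p ∂sphereMeasure n :=
    integral_nonneg fun _ => by positivity
  have hD : 0 ≤ ∫ x in Ω, ‖fderiv ℝ u x‖ ^ p := integral_nonneg fun _ => by positivity
  have hreal := ENNReal.toReal_mono (by finiteness) hHolder
  rw [ENNReal.toReal_mul, ← ENNReal.toReal_rpow, ← ENNReal.toReal_rpow,
    ENNReal.toReal_ofReal (mul_nonneg hc hD)] at hreal
  rw [affineEnergy, alphanp, ← hIdef, ← ENNReal.toReal_rpow, nOmega_eq_toReal_sphereMeasure_univ]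
  exact rpow_mul_rpow_neg_mul_rpow_neg_le hn0 hp0 ENNReal.toReal_nonneg hc hD
    ENNReal.toReal_nonneg hreal

/-- Comparison with the Dirichlet energy: `E_{p,Ω}(u) ≤ (∫_Ω |∇u|^p dx)^{1/p}`. -/
theorem statement7 (n : ℕ) (hn : 2 ≤ n) (p : ℝ) (hp : 1 ≤ p) (hpn : p < n)
    (Ω : Set (En n)) (hΩo : IsOpen Ω) (hΩb : Bornology.IsBounded Ω)
    (e₁ : En n) (he₁ : ‖e₁‖ = 1)
    (u : En n → ℝ) (hu : ContDiff ℝ 1 u) (hcs : HasCompactSupport u)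
    (hsupp : tsupport u ⊆ Ω) :
    affineEnergy n p e₁ Ω u ≤ (∫ x in Ω, ‖fderiv ℝ u x‖ ^ p) ^ (1 / p) :=
  statement7_general n hn p hp Ω e₁ he₁ u hu hcs
end
end

section
/- (Proposition 7: affine energy equals Dirichlet energy for radial functions.) Let 1 ≤ p < n and let u : ℝⁿ → ℝ be a C¹ function with compact support that is radial, i.e. u(x) = φ(|x|) for some function φ : [0,∞) → ℝ. Then E_p(u) = (∫_{ℝⁿ} |∇u(x)|^p dx)^{1/p}. -/
open MeasureTheory Metric Filter
open scoped ENNReal RealInnerProductSpace NNReal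

noncomputable section

/-- The directional energy over all of `ℝⁿ`: `Ψ_ξ(u) = ∫_{ℝⁿ} |∇u(x)·ξ|^p dx`. -/
def PsiAll (n : ℕ) (p : ℝ) (u : En n → ℝ) (ξ : unitSphere n) : ℝ :=
  ∫ x, |fderiv ℝ u x (ξ : En n)| ^ p

/-- The affine `L^p` energy `E_p(u)` on `ℝⁿ`; the conventions `0^{-n/p} = +∞`
and `(+∞)^{-1/n} = 0` are built into `ENNReal.rpow`. -/
def affineEnergyAll (n : ℕ) (p : ℝ) (e₁ : En n) (u : En n → ℝ) : ℝ :=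
  alphanp n p e₁ *
    ((∫⁻ ξ, ENNReal.ofReal (PsiAll n p u ξ) ^ (-((n : ℝ) / p)) ∂(sphereMeasure n)) ^
      (-(1 / (n : ℝ)))).toReal

/-! Radial symmetry gives `Du(x) = Du(Rx) ∘ R` for every linear isometry `R`. Hence `Ψ_ξ(u)` does
not depend on `ξ`, `Du(x)` is a multiple of `⟨x/|x|, ·⟩`, and `|Du(x)|` depends only on `|x|`.
In polar coordinates both `Ψ_{e₁}(u)` and `∫ |∇u|^p` factor through the same radial integral `J`:
`Ψ_{e₁}(u) = (∫_{S^{n-1}} |⟨e₁, ξ⟩|^p dσ) J` and `∫ |∇u|^p = nω_n J`, and `α_{n,p}` is exactly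
the constant that turns the first into the `p`-th root of the second. -/

section Radial

variable {E : Type*} [NormedAddCommGroup E] [InnerProductSpace ℝ E] {u : E → ℝ} {φ : ℝ → ℝ}

theorem exists_linearIsometryEquiv_apply_eq {x y : E} (h : ‖x‖ = ‖y‖) :
    ∃ R : E ≃ₗᵢ[ℝ] E, R x = y :=
  ⟨Submodule.reflection (ℝ ∙ (x - y))ᗮ, Submodule.reflection_sub h⟩

theorem fderiv_of_radial_eq_comp (hrad : ∀ x, u x = φ ‖x‖) (R : E ≃ₗᵢ[ℝ] E) (x : E) :
    fderiv ℝ u x = (fderiv ℝ u (R x)).comp (R : E →L[ℝ] E) := by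
  have hinv : u ∘ R.toContinuousLinearEquiv = u := funext fun y => by simp [hrad]
  have h := R.toContinuousLinearEquiv.comp_right_fderiv (f := u) (x := x)
  rwa [hinv] at h

theorem fderiv_of_radial_apply_eq_zero (hrad : ∀ x, u x = φ ‖x‖) {x v : E} (hv : ⟪v, x⟫ = 0) :
    fderiv ℝ u x v = 0 := by
  set R := Submodule.reflection (ℝ ∙ v)ᗮ
  have hRx : R x = x := Submodule.reflection_mem_subspace_eq_self
    (Submodule.mem_orthogonal_singleton_iff_inner_right.mpr hv)
  have hRv : R v = -v := Submodule.reflection_orthogonalComplement_singleton_eq_neg v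
  have h := congr($(fderiv_of_radial_eq_comp hrad R x) v)
  rw [ContinuousLinearMap.comp_apply, hRx, LinearIsometryEquiv.coe_coe'', hRv, map_neg] at h
  linarith

theorem fderiv_of_radial_eq_smul_innerSL (hrad : ∀ x, u x = φ ‖x‖) {x : E} (hx : x ≠ 0) :
    fderiv ℝ u x = fderiv ℝ u x (‖x‖⁻¹ • x) • innerSL ℝ (‖x‖⁻¹ • x) := by
  set y : E := ‖x‖⁻¹ • x
  have hy : ‖y‖ = 1 := norm_smul_inv_norm hx
  ext ξ
  have hperp : ⟪ξ - ⟪y, ξ⟫ • y, x⟫ = 0 := by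
    have hxy : x = ‖x‖ • y := by simp [y, smul_smul, hx]
    rw [hxy, inner_smul_right, inner_sub_left, inner_smul_left, real_inner_self_eq_norm_sq, hy,
      real_inner_comm]
    simp
  have h := fderiv_of_radial_apply_eq_zero hrad hperp
  rw [map_sub, map_smul, smul_eq_mul, sub_eq_zero] at h
  simp [h, mul_comm]

theorem abs_fderiv_of_radial_apply (hrad : ∀ x, u x = φ ‖x‖) {x : E} (hx : x ≠ 0) (ξ : E) :
    |fderiv ℝ u x ξ| = |⟪‖x‖⁻¹ • x, ξ⟫| * ‖fderiv ℝ u x‖ := by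
  have hy : ‖‖x‖⁻¹ • x‖ = 1 := norm_smul_inv_norm hx
  rw [fderiv_of_radial_eq_smul_innerSL hrad hx, norm_smul, innerSL_apply_norm, hy,
    FunLike.coe_smul, Pi.smul_apply, innerSL_apply_apply, smul_eq_mul, abs_mul, mul_one,
    Real.norm_eq_abs, mul_comm]

theorem norm_fderiv_of_radial_eq (hrad : ∀ x, u x = φ ‖x‖) {x y : E} (h : ‖x‖ = ‖y‖) :
    ‖fderiv ℝ u x‖ = ‖fderiv ℝ u y‖ := by
  obtain ⟨R, rfl⟩ := exists_linearIsometryEquiv_apply_eq h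
  rw [fderiv_of_radial_eq_comp hrad R x, ContinuousLinearMap.opNorm_comp_linearIsometryEquiv]

theorem integral_abs_fderiv_of_radial_apply_eq [FiniteDimensional ℝ E] [MeasurableSpace E]
    [BorelSpace E] (hrad : ∀ x, u x = φ ‖x‖) (p : ℝ) {ξ e : E} (h : ‖ξ‖ = ‖e‖) :
    ∫ x, |fderiv ℝ u x ξ| ^ p = ∫ x, |fderiv ℝ u x e| ^ p := by
  obtain ⟨R, rfl⟩ := exists_linearIsometryEquiv_apply_eq h.symm
  rw [← (R.measurePreserving.integral_comp R.toHomeomorph.measurableEmbedding)]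
  congr with x
  rw [fderiv_of_radial_eq_comp hrad R x]
  rfl

end Radial

section Polar

variable {E : Type*} [NormedAddCommGroup E] [NormedSpace ℝ E] [Nontrivial E]
  [FiniteDimensional ℝ E] [MeasurableSpace E] [BorelSpace E] (μ : Measure E) [μ.IsAddHaarMeasure]

theorem integral_eq_integral_sphere_mul_integral_radius {f a : E → ℝ} {b : ℝ → ℝ}
    (hf : ∀ x ≠ 0, f x = a (‖x‖⁻¹ • x) * b ‖x‖) :
    ∫ x, f x ∂μ = (∫ ξ, a ξ ∂μ.toSphere) *
      ∫ r, b r ∂(Measure.volumeIoiPow (Module.finrank ℝ E - 1)) := by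
  have hne : ∀ᵐ x ∂μ, x ∈ ({0}ᶜ : Set E) := compl_mem_ae_iff.mpr (measure_singleton 0)
  conv_lhs => rw [← Measure.restrict_eq_self_of_ae_mem hne]
  rw [← integral_subtype_comap (measurableSet_singleton 0).compl, ← integral_prod_mul,
    ← (μ.measurePreserving_homeomorphUnitSphereProd).integral_comp
      (homeomorphUnitSphereProd E).measurableEmbedding]
  congr with x
  simp only [homeomorphUnitSphereProd_apply_fst_coe, homeomorphUnitSphereProd_apply_snd_coe]
  exact hf x x.2

end Polar

section RadialPolar

variable {E : Type*} [NormedAddCommGroup E] [InnerProductSpace ℝ E] [FiniteDimensional ℝ E]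
  [MeasurableSpace E] [BorelSpace E] (μ : Measure E) [μ.IsAddHaarMeasure]
  {u : E → ℝ} {φ : ℝ → ℝ} {e : E}

theorem integral_norm_fderiv_rpow_of_radial (hrad : ∀ x, u x = φ ‖x‖) (he : ‖e‖ = 1) (p : ℝ) :
    ∫ x, ‖fderiv ℝ u x‖ ^ p ∂μ = μ.toSphere.real Set.univ *
      ∫ r, ‖fderiv ℝ u ((r : ℝ) • e)‖ ^ p ∂(Measure.volumeIoiPow (Module.finrank ℝ E - 1)) := by
  have : Nontrivial E := ⟨e, 0, by simp [← norm_ne_zero_iff, he]⟩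
  rw [integral_eq_integral_sphere_mul_integral_radius μ (a := fun _ => 1)
    (b := fun r => ‖fderiv ℝ u (r • e)‖ ^ p), integral_const, smul_eq_mul, mul_one]
  intro x _
  rw [one_mul, norm_fderiv_of_radial_eq hrad (y := ‖x‖ • e) (by simp [norm_smul, he])]

theorem integral_abs_fderiv_apply_rpow_of_radial (hrad : ∀ x, u x = φ ‖x‖) (he : ‖e‖ = 1)
    (p : ℝ) :
    ∫ x, |fderiv ℝ u x e| ^ p ∂μ = (∫ ξ, |⟪e, (ξ : E)⟫| ^ p ∂μ.toSphere) *
      ∫ r, ‖fderiv ℝ u ((r : ℝ) • e)‖ ^ p ∂(Measure.volumeIoiPow (Module.finrank ℝ E - 1)) := by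
  have : Nontrivial E := ⟨e, 0, by simp [← norm_ne_zero_iff, he]⟩
  refine integral_eq_integral_sphere_mul_integral_radius μ (a := fun y => |⟪e, y⟫| ^ p)
    (b := fun r => ‖fderiv ℝ u (r • e)‖ ^ p) fun x hx => ?_
  rw [abs_fderiv_of_radial_apply hrad hx, Real.mul_rpow (abs_nonneg _) (norm_nonneg _),
    real_inner_comm, norm_fderiv_of_radial_eq hrad (y := ‖x‖ • e) (by simp [norm_smul, he])]

end RadialPolar

theorem integral_abs_inner_rpow_toSphere_pos {E : Type*} [NormedAddCommGroup E]
    [InnerProductSpace ℝ E] [FiniteDimensional ℝ E] [MeasurableSpace E] [BorelSpace E]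
    (μ : Measure E) [μ.IsAddHaarMeasure] {e : E} (he : ‖e‖ = 1) {p : ℝ} (hp : 0 ≤ p) :
    0 < ∫ ξ, |⟪e, (ξ : E)⟫| ^ p ∂μ.toSphere := by
  have hcont : Continuous fun ξ : sphere (0 : E) 1 => |⟪e, (ξ : E)⟫| ^ p :=
    (continuous_const.inner continuous_subtype_val).abs.rpow_const fun _ => Or.inr hp
  refine hcont.integral_pos_of_hasCompactSupport_nonneg_nonzero (x := ⟨e, by simpa using he⟩)
    (HasCompactSupport.of_compactSpace _) (fun ξ => by positivity) ?_
  simp [he]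

instance (n : ℕ) : IsFiniteMeasure (sphereMeasure n) :=
  inferInstanceAs (IsFiniteMeasure (volume : Measure (En n)).toSphere)

theorem sphereMeasure_real_univ (n : ℕ) : (sphereMeasure n).real Set.univ = nOmega n := by
  rw [sphereMeasure, Measure.toSphere_real_apply_univ, finrank_euclideanSpace_fin, nOmega,
    measureReal_def]

theorem ENNReal.toReal_ofReal_rpow_neg_mul_rpow_neg {a b s t : ℝ} (ha : 0 ≤ a) (hb : 0 < b)
    (hs : 0 < s) (ht : 0 < t) :
    ((ENNReal.ofReal a ^ (-s) * ENNReal.ofReal b) ^ (-t)).toReal = a ^ (s * t) * b ^ (-t) := by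
  rcases ha.eq_or_lt with rfl | ha
  · rw [ENNReal.ofReal_zero, ENNReal.zero_rpow_of_neg (neg_neg_of_pos hs),
      ENNReal.top_mul (ENNReal.ofReal_pos.2 hb).ne', ENNReal.top_rpow_of_neg (neg_neg_of_pos ht),
      Real.zero_rpow (by positivity), zero_mul, ENNReal.toReal_zero]
  · rw [ENNReal.ofReal_rpow_of_pos ha, ← ENNReal.ofReal_mul (by positivity),
      ENNReal.ofReal_rpow_of_pos (by positivity), ENNReal.toReal_ofReal (by positivity),
      Real.mul_rpow (by positivity) hb.le, ← Real.rpow_mul ha.le, neg_mul_neg]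

theorem nOmega_pos {n : ℕ} (hn : n ≠ 0) : 0 < nOmega n := by
  have : NeZero n := ⟨hn⟩
  have : NeZero (sphereMeasure n) := ⟨Measure.toSphere_ne_zero _⟩
  rw [← sphereMeasure_real_univ]
  exact measureReal_univ_pos

theorem affineEnergyAll_eq_of_forall_psiAll_eq {n : ℕ} (hn : n ≠ 0) {p : ℝ} (hp : 0 < p)
    {e₁ : En n} (he₁ : ‖e₁‖ = 1) {u : En n → ℝ} {C : ℝ} (hC : 0 ≤ C)
    (hPsi : ∀ ξ, PsiAll n p u ξ = C) :
    affineEnergyAll n p e₁ u =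
      (nOmega n * (C / ∫ ξ, |⟪e₁, (ξ : En n)⟫| ^ p ∂sphereMeasure n)) ^ (1 / p) := by
  set c := ∫ ξ, |⟪e₁, (ξ : En n)⟫| ^ p ∂sphereMeasure n
  have hc : 0 < c := integral_abs_inner_rpow_toSphere_pos _ he₁ hp.le
  have hσ := nOmega_pos hn
  have hn0 : (0 : ℝ) < n := by positivity
  rw [affineEnergyAll, alphanp, lintegral_congr fun ξ => by rw [hPsi ξ], lintegral_const,
    ← ofReal_measureReal, sphereMeasure_real_univ, ENNReal.toReal_ofReal_rpow_neg_mul_rpow_neg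
      hC hσ (by positivity) (by positivity)]
  have hexp : (n : ℝ) / p * (1 / n) = 1 / p := by field_simp
  have hσexp : ((n : ℝ) + p) / (n * p) + -(1 / n) = 1 / p := by field_simp; ring
  rw [hexp, Real.mul_rpow hσ.le (by positivity), Real.div_rpow hC hc.le, Real.rpow_neg hc.le]
  calc nOmega n ^ (((n : ℝ) + p) / (n * p)) * (c ^ (1 / p))⁻¹ *
        (C ^ (1 / p) * nOmega n ^ (-(1 / (n : ℝ))))
      = nOmega n ^ (((n : ℝ) + p) / (n * p) + -(1 / n)) * (C ^ (1 / p) / c ^ (1 / p)) := by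
        rw [Real.rpow_add hσ]; ring
    _ = _ := by rw [hσexp]

theorem statement13_general (n : ℕ) (hn : 2 ≤ n) (p : ℝ) (hp : 1 ≤ p)
    (e₁ : En n) (he₁ : ‖e₁‖ = 1)
    (u : En n → ℝ)
    (φ : ℝ → ℝ) (hrad : ∀ x : En n, u x = φ ‖x‖) :
    affineEnergyAll n p e₁ u = (∫ x, ‖fderiv ℝ u x‖ ^ p) ^ (1 / p) := by
  have hp0 : 0 < p := by linarith
  set J := ∫ r, ‖fderiv ℝ u ((r : ℝ) • e₁)‖ ^ p
    ∂(Measure.volumeIoiPow (Module.finrank ℝ (En n) - 1))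
  set c := ∫ ξ, |⟪e₁, (ξ : En n)⟫| ^ p ∂sphereMeasure n
  have hc : 0 < c := integral_abs_inner_rpow_toSphere_pos _ he₁ hp0.le
  have hJ : 0 ≤ J := integral_nonneg fun r => by positivity
  have hPsi : ∀ ξ : unitSphere n, PsiAll n p u ξ = c * J := fun ξ => by
    rw [PsiAll, integral_abs_fderiv_of_radial_apply_eq hrad p (e := e₁) (by simp [he₁]),
      integral_abs_fderiv_apply_rpow_of_radial volume hrad he₁]
    rfl
  rw [affineEnergyAll_eq_of_forall_psiAll_eq (by omega) hp0 he₁ (by positivity) hPsi,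
    integral_norm_fderiv_rpow_of_radial volume hrad he₁, ← sphereMeasure, sphereMeasure_real_univ,
    mul_div_cancel_left₀ _ hc.ne']

/-- Proposition 7: the affine energy equals the Dirichlet energy for radial functions:
if `u(x) = φ(|x|)` is `C¹` with compact support, then `E_p(u) = (∫_{ℝⁿ} |∇u|^p dx)^{1/p}`. -/
theorem statement13 (n : ℕ) (hn : 2 ≤ n) (p : ℝ) (hp : 1 ≤ p) (hpn : p < n)
    (e₁ : En n) (he₁ : ‖e₁‖ = 1)
    (u : En n → ℝ) (hu : ContDiff ℝ 1 u) (hcs : HasCompactSupport u)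
    (φ : ℝ → ℝ) (hrad : ∀ x : En n, u x = φ ‖x‖) :
    affineEnergyAll n p e₁ u = (∫ x, ‖fderiv ℝ u x‖ ^ p) ^ (1 / p) :=
  statement13_general n hn p hp e₁ he₁ u φ hrad
end
end

section
/- (Divergence-theorem identity in the proof of the Pohozaev identity, Proposition 4.) Let n ≥ 2, let Ω ⊆ ℝⁿ be an open set, let u : ℝⁿ → ℝ be a C¹ function with compact support contained in Ω, let f : ℝ → ℝ be continuous, and let F(t) = ∫_0^t f(θ) dθ. Then ∫_Ω (x·∇u(x)) f(u(x)) dx = −n ∫_Ω F(u(x)) dx. -/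
open MeasureTheory Metric Filter
open scoped ENNReal RealInnerProductSpace NNReal

noncomputable section

/-! Write `g = F ∘ u`, so that the integrand is `Dg(x) x`. Expanding `x` in a basis, each
coordinate term `∫ xᵢ ∂ᵢg` integrates by parts to `-∫ g`, and there are `n` of them. -/

open Module

section EulerOperator

variable {E : Type*} [NormedAddCommGroup E] [NormedSpace ℝ E]
  [MeasurableSpace E] [BorelSpace E] {μ : Measure E} [μ.IsAddHaarMeasure]
  {g : E → ℝ}

theorem integrable_clm_mul_fderiv_apply (hg : ContDiff ℝ 1 g) (hcs : HasCompactSupport g)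
    (ℓ : E →L[ℝ] ℝ) (v : E) : Integrable (fun x ↦ ℓ x * fderiv ℝ g x v) μ :=
  (ℓ.continuous.mul ((hg.continuous_fderiv one_ne_zero).clm_apply continuous_const))
    |>.integrable_of_hasCompactSupport (hcs.fderiv_apply ℝ v).mul_left

variable [FiniteDimensional ℝ E]

theorem integral_clm_mul_fderiv_apply (hg : ContDiff ℝ 1 g) (hcs : HasCompactSupport g)
    (ℓ : E →L[ℝ] ℝ) (v : E) :
    ∫ x, ℓ x * fderiv ℝ g x v ∂μ = -(ℓ v * ∫ x, g x ∂μ) := by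
  have hgc := hg.continuous
  rw [integral_mul_fderiv_eq_neg_fderiv_mul_of_integrable (f := ℓ) ?_
    (integrable_clm_mul_fderiv_apply hg hcs ℓ v)
    ((ℓ.continuous.mul hgc).integrable_of_hasCompactSupport hcs.mul_left)
    (fun x _ ↦ ℓ.differentiableAt) (fun x _ ↦ hg.differentiable one_ne_zero x)]
  · simp [ContinuousLinearMap.fderiv, integral_const_mul]
  · simpa [ContinuousLinearMap.fderiv] using
      (hgc.integrable_of_hasCompactSupport hcs).const_mul (ℓ v)

theorem integral_fderiv_apply_self (hg : ContDiff ℝ 1 g) (hcs : HasCompactSupport g) :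
    ∫ x, fderiv ℝ g x x ∂μ = -(finrank ℝ E) * ∫ x, g x ∂μ := by
  let b := finBasis ℝ E
  let coord (i : Fin (finrank ℝ E)) : E →L[ℝ] ℝ := LinearMap.toContinuousLinearMap (b.coord i)
  have hexpand (x : E) : fderiv ℝ g x x = ∑ i, coord i x * fderiv ℝ g x (b i) := by
    calc fderiv ℝ g x x = fderiv ℝ g x (∑ i, b.repr x i • b i) := by rw [b.sum_repr]
      _ = _ := by simp only [map_sum, map_smul, smul_eq_mul]; rfl
  calc ∫ x, fderiv ℝ g x x ∂μ = ∑ i, ∫ x, coord i x * fderiv ℝ g x (b i) ∂μ := by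
        simp_rw [hexpand]
        exact integral_finsetSum _ fun i _ ↦ integrable_clm_mul_fderiv_apply hg hcs _ _
    _ = ∑ _i : Fin (finrank ℝ E), -∫ x, g x ∂μ := Finset.sum_congr rfl fun i _ ↦ by
        rw [integral_clm_mul_fderiv_apply hg hcs (coord i)]
        simp [coord]
    _ = -(finrank ℝ E) * ∫ x, g x ∂μ := by simp

end EulerOperator

section Primitive

variable {E : Type*} [NormedAddCommGroup E] [NormedSpace ℝ E] {f : ℝ → ℝ} {u : E → ℝ}

theorem Continuous.contDiff_one_primitive (hf : Continuous f) :
    ContDiff ℝ 1 fun t ↦ ∫ θ in (0 : ℝ)..t, f θ := by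
  rw [contDiff_one_iff_deriv]
  have hF (t : ℝ) := (hf.integral_hasStrictDerivAt 0 t).hasDerivAt
  exact ⟨fun t ↦ (hF t).differentiableAt, by simpa [funext fun t ↦ (hF t).deriv] using hf⟩

theorem fderiv_primitive_comp_apply (hf : Continuous f) (hu : Differentiable ℝ u) (x v : E) :
    fderiv ℝ (fun y ↦ ∫ θ in (0 : ℝ)..u y, f θ) x v = fderiv ℝ u x v * f (u x) := by
  have hFu : HasFDerivAt (fun y ↦ ∫ θ in (0 : ℝ)..u y, f θ) (f (u x) • fderiv ℝ u x) x :=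
    (hf.integral_hasStrictDerivAt 0 (u x)).hasDerivAt.comp_hasFDerivAt x (hu x).hasFDerivAt
  simp [hFu.fderiv, mul_comm]

end Primitive

theorem setIntegral_eq_integral_of_support_subset {X G : Type*} [MeasurableSpace X]
    [NormedAddCommGroup G] [NormedSpace ℝ G] {μ : Measure X} {s : Set X} {g : X → G} (hs : Function.support g ⊆ s) :
    ∫ x in s, g x ∂μ = ∫ x, g x ∂μ :=
  setIntegral_eq_integral_of_forall_compl_eq_zero fun _ hx ↦
    Function.notMem_support.mp fun h ↦ hx (hs h)

theorem statement14_general (n : ℕ)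
    (Ω : Set (En n))
    (u : En n → ℝ) (hu : ContDiff ℝ 1 u) (hcs : HasCompactSupport u)
    (hsupp : tsupport u ⊆ Ω)
    (f : ℝ → ℝ) (hf : Continuous f) :
    (∫ x in Ω, (fderiv ℝ u x x) * f (u x)) =
      -(n : ℝ) * ∫ x in Ω, (∫ θ in (0 : ℝ)..(u x), f θ) := by
  set g : En n → ℝ := fun x ↦ ∫ θ in (0 : ℝ)..u x, f θ
  have hg : ContDiff ℝ 1 g := hf.contDiff_one_primitive.comp hu
  have hF0 : ∫ θ in (0 : ℝ)..0, f θ = 0 := intervalIntegral.integral_same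
  have hgΩ : tsupport g ⊆ Ω :=
    (tsupport_comp_subset (g := fun t ↦ ∫ θ in (0 : ℝ)..t, f θ) hF0 u).trans hsupp
  have hgcs : HasCompactSupport g :=
    hcs.comp_left (g := fun t ↦ ∫ θ in (0 : ℝ)..t, f θ) hF0
  calc ∫ x in Ω, fderiv ℝ u x x * f (u x) = ∫ x in Ω, fderiv ℝ g x x := by
        simp_rw [g, fderiv_primitive_comp_apply hf (hu.differentiable one_ne_zero)]
    _ = ∫ x, fderiv ℝ g x x :=
        setIntegral_eq_integral_of_support_subset fun x hx ↦
          hgΩ (support_fderiv_subset ℝ fun h ↦ hx (by simp [h]))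
    _ = -(n : ℝ) * ∫ x in Ω, g x := by
        rw [integral_fderiv_apply_self hg hgcs, finrank_euclideanSpace_fin,
          setIntegral_eq_integral_of_support_subset ((subset_tsupport g).trans hgΩ)]

/-- Divergence-theorem identity from the proof of the Pohozaev identity:
`∫_Ω (x·∇u(x)) f(u(x)) dx = -n ∫_Ω F(u(x)) dx`, where `F(t) = ∫_0^t f(θ) dθ`. -/
theorem statement14 (n : ℕ) (hn : 2 ≤ n)
    (Ω : Set (En n)) (hΩo : IsOpen Ω)
    (u : En n → ℝ) (hu : ContDiff ℝ 1 u) (hcs : HasCompactSupport u)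
    (hsupp : tsupport u ⊆ Ω)
    (f : ℝ → ℝ) (hf : Continuous f) :
    (∫ x in Ω, (fderiv ℝ u x x) * f (u x)) =
      -(n : ℝ) * ∫ x in Ω, (∫ θ in (0 : ℝ)..(u x), f θ) :=
  statement14_general n Ω u hu hcs hsupp f hf
end
end

section
/- (Key inequality behind Theorem 4: nonpositivity of the least energy level above the principal affine eigenvalue.) Let 1 < p < n, let p < q ≤ np/(n−p), and let Ω ⊆ ℝⁿ be a nonempty bounded open set. Define λ₁ = inf { E_{p,Ω}(u)^p : u a C¹ function ℝⁿ → ℝ with compact support contained in Ω and ∫_Ω |u|^p dx = 1 } and, for λ ∈ ℝ, c(λ) = inf { (E_{p,Ω}(u)^p − λ ∫_Ω |u|^p dx) / (∫_Ω |u|^q dx)^{p/q} : u a C¹ function ℝⁿ → ℝ with compact support contained in Ω, u ≠ 0 }. If λ ≥ λ₁, then c(λ) ≤ 0. -/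
open MeasureTheory Metric Filter
open scoped ENNReal RealInnerProductSpace NNReal

noncomputable section

/-!
For `‖u‖_{L^p(Ω)} = 1` the quotient defining `c(λ)` is `(E_{p,Ω}(u)^p - λ) / ‖u‖_{L^q(Ω)}^p`.
Since `Ω` has finite measure, Hölder's inequality bounds the denominator below uniformly:
`‖u‖_{L^q(Ω)}^p ≥ |Ω|^{p/q - 1}`. So normalized functions with `E_{p,Ω}(u)^p` close to
`λ₁ ≤ λ` give quotients below any `ε > 0`.
-/

theorem HasCompactSupport.abs_rpow {Y : Type*} [TopologicalSpace Y] {u : Y → ℝ} {r : ℝ}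
    (hu : HasCompactSupport u) (hr : 0 < r) : HasCompactSupport fun x => |u x| ^ r :=
  hu.comp_left (g := fun t : ℝ => |t| ^ r) (by simp [Real.zero_rpow hr.ne'])

theorem integral_le_integral_rpow_rpow_inv_mul_measureReal_univ {α : Type*} [MeasurableSpace α]
    {μ : Measure α} [IsFiniteMeasure μ] {f : α → ℝ} (hf : 0 ≤ᵐ[μ] f) {a : ℝ} (ha : 1 < a)
    (hfa : MemLp f (ENNReal.ofReal a) μ) :
    ∫ x, f x ∂μ ≤ (∫ x, f x ^ a ∂μ) ^ a⁻¹ * μ.real Set.univ ^ (1 - a⁻¹) := by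
  have hconj := Real.HolderConjugate.conjExponent ha
  have := integral_mul_le_Lp_mul_Lq_of_nonneg hconj hf (ae_of_all _ fun _ => zero_le_one) hfa
    (memLp_const 1)
  simpa [hconj.one_sub_inv] using this

section TopologicalMeasureSpace

variable {X : Type*} [TopologicalSpace X] [MeasurableSpace X] [OpensMeasurableSpace X]
  {μ : Measure X} [IsFiniteMeasureOnCompacts μ] {s : Set X} {u : X → ℝ} {r : ℝ}

theorem integral_abs_rpow_pos [μ.IsOpenPosMeasure] (hu : Continuous u)
    (hcs : HasCompactSupport u) (hs : tsupport u ⊆ s) (hne : u ≠ 0) (hr : 0 < r) :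
    0 < ∫ x in s, |u x| ^ r ∂μ := by
  have hint : Integrable (fun x => |u x| ^ r) μ :=
    (hu.abs.rpow_const fun _ => Or.inr hr.le).integrable_of_hasCompactSupport (hcs.abs_rpow hr)
  have hsupp : Function.support (fun x => |u x| ^ r) = Function.support u := by
    ext x
    simp [Real.rpow_eq_zero (abs_nonneg _) hr.ne']
  have hopen : IsOpen (Function.support u) := hu.isOpen_support
  rw [integral_pos_iff_support_of_nonneg (fun x => by positivity) hint.restrict, hsupp,
    Measure.restrict_apply hopen.measurableSet,
    Set.inter_eq_self_of_subset_left ((subset_tsupport u).trans hs)]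
  exact hopen.measure_pos μ (Function.support_nonempty_iff.mpr hne)

theorem integral_abs_rpow_le_integral_abs_rpow_rpow_mul_measureReal (hs : μ s ≠ ⊤)
    (hu : Continuous u) (hcs : HasCompactSupport u) {p q : ℝ} (hp : 0 < p) (hpq : p < q) :
    ∫ x in s, |u x| ^ p ∂μ ≤ (∫ x in s, |u x| ^ q ∂μ) ^ (p / q) * μ.real s ^ (1 - p / q) := by
  have : IsFiniteMeasure (μ.restrict s) := isFiniteMeasure_restrict.mpr hs
  have hHolder := integral_le_integral_rpow_rpow_inv_mul_measureReal_univ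
    (ae_of_all _ fun x => by positivity) ((one_lt_div hp).mpr hpq)
    ((hu.abs.rpow_const fun _ => Or.inr hp.le).memLp_of_hasCompactSupport (hcs.abs_rpow hp))
    (μ := μ.restrict s)
  have hpow : ∀ x, (|u x| ^ p) ^ (q / p) = |u x| ^ q := fun x => by
    rw [← Real.rpow_mul (abs_nonneg _), mul_div_cancel₀ q hp.ne']
  simpa only [hpow, inv_div, measureReal_restrict_apply_univ] using hHolder

end TopologicalMeasureSpace

theorem integral_abs_const_mul_rpow {α : Type*} [MeasurableSpace α] (μ : Measure α) (c : ℝ)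
    (u : α → ℝ) (p : ℝ) : ∫ x, |c * u x| ^ p ∂μ = |c| ^ p * ∫ x, |u x| ^ p ∂μ := by
  simp only [abs_mul, Real.mul_rpow (abs_nonneg _) (abs_nonneg _), integral_const_mul]

theorem exists_contDiff_integral_abs_rpow_eq_one {E : Type*} [NormedAddCommGroup E]
    [NormedSpace ℝ E] [MeasurableSpace E] [BorelSpace E] {μ : Measure E}
    [IsFiniteMeasureOnCompacts μ] [μ.IsOpenPosMeasure] {s : Set E} {u : E → ℝ}
    (hu : ContDiff ℝ 1 u) (hcs : HasCompactSupport u) (hs : tsupport u ⊆ s) (hne : u ≠ 0)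
    {p : ℝ} (hp : 0 < p) :
    ∃ w : E → ℝ, ContDiff ℝ 1 w ∧ HasCompactSupport w ∧ tsupport w ⊆ s ∧
      ∫ x in s, |w x| ^ p ∂μ = 1 := by
  have hI := integral_abs_rpow_pos (μ := μ) hu.continuous hcs hs hne hp
  set c := (∫ x in s, |u x| ^ p ∂μ) ^ (-p⁻¹)
  refine ⟨fun x => c * u x, contDiff_const.mul hu, hcs.mul_left,
    tsupport_mul_subset_right.trans hs, ?_⟩
  rw [integral_abs_const_mul_rpow, abs_of_pos (by positivity), ← Real.rpow_mul hI.le,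
    neg_mul, inv_mul_cancel₀ hp.ne', Real.rpow_neg_one, inv_mul_cancel₀ hI.ne']

/-- The hypothesis quantifies over `y ∈ s` because `sInf` of an empty or unbounded-below set
of reals is `0`, so neither case needs excluding. -/
theorem Real.sInf_nonpos_of_forall_exists_le {s : Set ℝ}
    (h : ∀ y ∈ s, ∀ ε > 0, ∃ x ∈ s, x ≤ ε) : sInf s ≤ 0 := by
  rcases s.eq_empty_or_nonempty with rfl | ⟨y, hy⟩
  · exact Real.sInf_empty.le
  by_cases hbdd : BddBelow s
  · refine le_of_forall_pos_le_add fun ε hε => ?_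
    obtain ⟨x, hx, hxε⟩ := h y hy ε hε
    simpa using (csInf_le hbdd hx).trans hxε
  · exact (Real.sInf_of_not_bddBelow hbdd).le

theorem div_le_of_lt_div_of_one_le_mul {x D C ε : ℝ} (hε : 0 ≤ ε) (hC : 0 < C)
    (hDC : 1 ≤ D * C) (hx : x < ε / C) : x / D ≤ ε := by
  have hD : 0 < D := pos_of_mul_pos_left (one_pos.trans_le hDC) hC.le
  rw [div_le_iff₀ hD]
  rw [lt_div_iff₀ hC] at hx
  nlinarith

theorem statement16_general (n : ℕ) (p q : ℝ) (hp1 : 1 < p) (hq : p < q)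
    (Ω : Set (En n)) (hΩb : Bornology.IsBounded Ω) (e₁ : En n) (lam : ℝ)
    (hlam : sInf {r : ℝ | ∃ u : En n → ℝ, ContDiff ℝ 1 u ∧ HasCompactSupport u ∧
        tsupport u ⊆ Ω ∧ (∫ x in Ω, |u x| ^ p) = 1 ∧
        r = affineEnergy n p e₁ Ω u ^ p} ≤ lam) :
    sInf {r : ℝ | ∃ u : En n → ℝ, ContDiff ℝ 1 u ∧ HasCompactSupport u ∧
        tsupport u ⊆ Ω ∧ u ≠ 0 ∧
        r = (affineEnergy n p e₁ Ω u ^ p - lam * ∫ x in Ω, |u x| ^ p) /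
          (∫ x in Ω, |u x| ^ q) ^ (p / q)} ≤ 0 := by
  have hp : 0 < p := one_pos.trans hp1
  set C := volume.real Ω ^ (1 - p / q)
  have holder : ∀ u : En n → ℝ, ContDiff ℝ 1 u → HasCompactSupport u →
      ∫ x in Ω, |u x| ^ p = 1 → 1 ≤ (∫ x in Ω, |u x| ^ q) ^ (p / q) * C := fun u hu hcs h1 =>
    h1 ▸ integral_abs_rpow_le_integral_abs_rpow_rpow_mul_measureReal hΩb.measure_lt_top.ne
      hu.continuous hcs hp hq
  refine Real.sInf_nonpos_of_forall_exists_le fun _ ⟨u₀, hu₀, hcs₀, hs₀, hne₀, _⟩ ε hε => ?_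
  obtain ⟨w, hw, hcsw, hsw, hnormw⟩ :=
    exists_contDiff_integral_abs_rpow_eq_one (μ := volume) hu₀ hcs₀ hs₀ hne₀ hp
  have hC : 0 < C :=
    pos_of_mul_pos_right (one_pos.trans_le (holder w hw hcsw hnormw)) (by positivity)
  obtain ⟨_, ⟨u, hu, hcs, hs, hnorm, rfl⟩, hlt⟩ :=
    exists_lt_of_csInf_lt (by exact ⟨_, w, hw, hcsw, hsw, hnormw, rfl⟩)
      (hlam.trans_lt (lt_add_of_pos_right _ (div_pos hε hC)))
  have hne : u ≠ 0 := by
    rintro rfl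
    simp [Real.zero_rpow hp.ne'] at hnorm
  refine ⟨_, ⟨u, hu, hcs, hs, hne, rfl⟩, ?_⟩
  rw [hnorm, mul_one]
  exact div_le_of_lt_div_of_one_le_mul hε.le hC (holder u hu hcs hnorm) (by linarith)

/-- Key inequality behind Theorem 4: if `λ ≥ λ₁ = inf {E_{p,Ω}(u)^p : ‖u‖_{L^p(Ω)} = 1}`,
then the least energy level
`c(λ) = inf {(E_{p,Ω}(u)^p - λ∫_Ω|u|^p)/(∫_Ω|u|^q)^{p/q} : u ≠ 0}` is nonpositive. -/
theorem statement16 (n : ℕ) (hn : 2 ≤ n) (p q : ℝ) (hp1 : 1 < p) (hpn : p < n)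
    (hq : p < q) (hq' : q ≤ (n : ℝ) * p / ((n : ℝ) - p))
    (Ω : Set (En n)) (hΩo : IsOpen Ω) (hΩb : Bornology.IsBounded Ω) (hΩne : Ω.Nonempty)
    (e₁ : En n) (he₁ : ‖e₁‖ = 1) (lam : ℝ)
    (hlam : sInf {r : ℝ | ∃ u : En n → ℝ, ContDiff ℝ 1 u ∧ HasCompactSupport u ∧
        tsupport u ⊆ Ω ∧ (∫ x in Ω, |u x| ^ p) = 1 ∧
        r = affineEnergy n p e₁ Ω u ^ p} ≤ lam) :
    sInf {r : ℝ | ∃ u : En n → ℝ, ContDiff ℝ 1 u ∧ HasCompactSupport u ∧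
        tsupport u ⊆ Ω ∧ u ≠ 0 ∧
        r = (affineEnergy n p e₁ Ω u ^ p - lam * ∫ x in Ω, |u x| ^ p) /
          (∫ x in Ω, |u x| ^ q) ^ (p / q)} ≤ 0 :=
  statement16_general n p q hp1 hq Ω hΩb e₁ lam hlam
end
end
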